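/- Let (b₀,b₁,…) be a sequence of integers with |b_i| ≥ 2 for i = 1, …, n, and let 1 ≤ k ≤ n. Then the convergents v_{k−1} and v_n of [b₀,b₁,…] are real numbers (not ∞) and satisfy |v_n − v_{k−1}| ≤ 1/(|b_k| − 1). -/
import Mathlib


open Filter Topology OnePoint

/-- The Möbius map `z ↦ b - 1/z` on the one-point compactification `ℝ∞` of `ℝ`. -/
noncomputable def mob (b : ℤ) (z : OnePoint ℝ) : OnePoint ℝ :=
  Option.elim z ((b : ℝ) : OnePoint ℝ)
    (fun x => if x = 0 then (∞ : OnePoint ℝ) else (((b : ℝ) - 1 / x : ℝ) : OnePoint ℝ))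

/-- Value of a finite continued fraction `[b₀, …, b_m]`, i.e. `s₀(s₁(⋯ s_m(∞)))`. -/
noncomputable def cfVal : List ℤ → OnePoint ℝ
  | [] => ∞
  | b :: t => mob b (cfVal t)

/-- The `n`th convergent `v_n = S_n(∞)` of the continued fraction `[b₀, b₁, …]`. -/
noncomputable def cfConv (b : ℕ → ℤ) (n : ℕ) : OnePoint ℝ :=
  cfVal ((List.range (n + 1)).map b)

/-- `m` is a positive index at which the coefficient is `0`, `1` or `-1`. -/
def badIdx (b : ℕ → ℤ) (m : ℕ) : Prop :=
  1 ≤ m ∧ (b m = 0 ∨ b m = 1 ∨ b m = -1)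

instance (b : ℕ → ℤ) : DecidablePred (badIdx b) := fun m => by
  unfold badIdx; infer_instance

-- The singularization map `Φ` on integer sequences.
open Classical in
noncomputable def Phi (b : ℕ → ℤ) : ℕ → ℤ :=
  if h : ∃ m, badIdx b m then
    let m := Nat.find h
    if b m = 0 then
      fun k => if k + 1 < m then b k
        else if k = m - 1 then b (m - 1) + b (m + 1)
        else b (k + 2)
    else if b m = 1 then
      fun k => if k + 1 < m then b k
        else if k = m - 1 then b (m - 1) - 1
        else if k = m then b (m + 1) - 1
        else b (k + 1)
    else
      fun k => if k + 1 < m then b k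
        else if k = m - 1 then b (m - 1) + 1
        else if k = m then b (m + 1) + 1
        else b (k + 1)
  else b

-- `p(b) ∈ ℕ ∪ {∞}`: the least positive index at which `0`, `1` or `-1` occurs.
open Classical in
noncomputable def pIdx (b : ℕ → ℤ) : ℕ∞ :=
  if h : ∃ m, badIdx b m then (Nat.find h : ℕ∞) else ⊤

/-- `p⁽ⁿ⁾ → ∞` as `n → ∞`. -/
def PTendsToTop (b : ℕ → ℤ) : Prop :=
  ∀ N : ℕ, ∃ M : ℕ, ∀ n ≥ M, (N : ℕ∞) < pIdx (Phi^[n] b)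

/-- `p = liminf pⁿ`, as a natural number (junk value if the liminf is `∞`). -/
noncomputable def pLim (b : ℕ → ℤ) : ℕ :=
  (Filter.liminf (fun n => pIdx (Phi^[n] b)) Filter.atTop).toNat

/-- `q⁽ⁿ⁾ = |b⁽ⁿ⁾_{p-1}|`. -/
noncomputable def qSeq (b : ℕ → ℤ) (n : ℕ) : ℕ :=
  ((Phi^[n] b) (pLim b - 1)).natAbs

/-- Two continued fractions have the same tail. -/
def SameTail (b c : ℕ → ℤ) : Prop := ∃ r s : ℕ, ∀ k : ℕ, b (r + k) = c (s + k)

/-- `bstar` is the limit continued fraction: each coefficient of `Φⁿ(b)` stabilises on it. -/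
def EventuallyCoeff (b bstar : ℕ → ℤ) : Prop :=
  ∀ k : ℕ, ∃ N : ℕ, ∀ n ≥ N, Phi^[n] b k = bstar k

/-- The point of `ℝ∞` represented by the integer fraction `a/b` (`∞` when `b = 0`). -/
noncomputable def intPt (a b : ℤ) : OnePoint ℝ :=
  if b = 0 then ∞ else (((a : ℝ) / (b : ℝ)) : OnePoint ℝ)

/-- Adjacency in the Farey graph: `x = a/b`, `y = c/d` with `ad - bc = ±1`. -/
def FareyAdj (x y : OnePoint ℝ) : Prop :=
  ∃ a b c d : ℤ, x = intPt a b ∧ y = intPt c d ∧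
    (a * d - b * c = 1 ∨ a * d - b * c = -1)

/-- `x` is an extended rational, i.e. a member of `ℚ∞ = ℚ ∪ {∞} ⊆ ℝ∞`. -/
def IsExtRat (x : OnePoint ℝ) : Prop :=
  x = ∞ ∨ ∃ q : ℚ, x = ((q : ℝ) : OnePoint ℝ)

-- One step of the index-tracking sequence, for the current coefficient sequence `c`.
open Classical in
noncomputable def eStep (c : ℕ → ℤ) (e : ℕ) : Option ℕ :=
  if h : ∃ m, badIdx c m then
    let m := Nat.find h
    if c m = 0 then
      if e + 2 ≤ m then Option.some e
      else if e = m - 1 ∨ e = m then (none : Option ℕ)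
      else Option.some (e - 2)
    else
      if e + 2 ≤ m then Option.some e
      else if e = m - 1 then (none : Option ℕ)
      else Option.some (e - 1)
  else Option.some e

/-- The index-tracking sequence `e⁽⁰⁾(k), e⁽¹⁾(k), …` (`none` once it has terminated). -/
noncomputable def eSeq (b : ℕ → ℤ) (k : ℕ) : ℕ → Option ℕ
  | 0 => Option.some k
  | n + 1 => (eSeq b k n).bind (eStep (Phi^[n] b))

lemma mob_infty (b : ℤ) : mob b ∞ = ((b : ℝ) : OnePoint ℝ) := rfl
lemma mob_coe (b : ℤ) (t : ℝ) (ht : t ≠ 0) :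
    mob b ((t : ℝ) : OnePoint ℝ) = (((b : ℝ) - 1 / t : ℝ) : OnePoint ℝ) := by
  show mob b (Option.some t) = _
  simp [mob, ht]

lemma two_le_abs_cast {a : ℤ} (h : 2 ≤ |a|) : (2:ℝ) ≤ |(a:ℝ)| := by
  rw [← Int.cast_abs]; exact_mod_cast h

lemma one_le_step {a : ℤ} {x : ℝ} (ha : 2 ≤ |a|) (hx : 1 ≤ |x|) :
    1 ≤ |(a:ℝ) - 1/x| ∧ (|a|:ℝ) - 1 ≤ |(a:ℝ) - 1/x| := by
  have hx0 : (0:ℝ) < |x| := lt_of_lt_of_le one_pos hx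
  have h1 : |1/x| ≤ 1 := by
    rw [abs_div, abs_one]
    exact div_le_one_of_le₀ hx (le_of_lt hx0)
  have h2 : |(a:ℝ)| - |1/x| ≤ |(a:ℝ) - 1/x| := abs_sub_abs_le_abs_sub _ _
  have h3 := two_le_abs_cast ha
  exact ⟨by linarith, by linarith⟩

lemma step_diff {a : ℤ} {x y c : ℝ} (hx : 1 ≤ |x|) (hy : 1 ≤ |y|)
    (hd : |x - y| ≤ c) :
    |((a:ℝ) - 1/x) - ((a:ℝ) - 1/y)| ≤ c := by
  have hx0 : x ≠ 0 := by intro h; rw [h] at hx; simp at hx; linarith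
  have hy0 : y ≠ 0 := by intro h; rw [h] at hy; simp at hy; linarith
  have he : ((a:ℝ) - 1/x) - ((a:ℝ) - 1/y) = (x - y)/(x*y) := by
    field_simp; ring
  rw [he, abs_div, abs_mul]
  have h1 : (1:ℝ) ≤ |x| * |y| := by nlinarith [abs_nonneg x]
  calc |x - y| / (|x| * |y|) ≤ |x - y| := div_le_self (abs_nonneg _) h1
    _ ≤ c := hd

/-- Tail values: real, `|t| ≥ 1` and `|t| ≥ |head| - 1`. -/
lemma tail_val (a₀ : ℤ) (T' : List ℤ) (h : ∀ a ∈ a₀ :: T', 2 ≤ |a|) :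
    ∃ t : ℝ, cfVal (a₀ :: T') = (t : OnePoint ℝ) ∧ 1 ≤ |t| ∧ (|a₀| : ℝ) - 1 ≤ |t| := by
  induction T' generalizing a₀ with
  | nil =>
    have h2 := two_le_abs_cast (h a₀ (by simp))
    exact ⟨a₀, rfl, by linarith, by linarith⟩
  | cons a₁ T'' ih =>
    obtain ⟨t, ht, h1, h2⟩ := ih a₁ (fun a ha => h a (by simp at ha ⊢; tauto))
    have ht0 : t ≠ 0 := by intro h; rw [h] at h1; simp at h1; linarith
    obtain ⟨hs1, hs2⟩ := one_le_step (h a₀ (by simp)) h1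
    refine ⟨(a₀:ℝ) - 1/t, ?_, hs1, hs2⟩
    show mob a₀ (cfVal (a₁ :: T'')) = _
    rw [ht, mob_coe _ _ ht0]

lemma ne_zero_of_one_le_abs {x : ℝ} (h : 1 ≤ |x|) : x ≠ 0 := by
  intro h0; rw [h0] at h; simp at h; linarith

/-- Main induction: comparing `cfVal (L ++ T)` with `cfVal L` for nonempty `L`. -/
lemma main_val (a : ℤ) (L : List ℤ) (t₀ : ℤ) (T' : List ℤ)
    (hL : ∀ x ∈ a :: L, 2 ≤ |x|) (hT : ∀ x ∈ t₀ :: T', 2 ≤ |x|) :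
    ∃ x y : ℝ, cfVal ((a :: L) ++ (t₀ :: T')) = (x : OnePoint ℝ) ∧
      cfVal (a :: L) = (y : OnePoint ℝ) ∧
      1 ≤ |x| ∧ 1 ≤ |y| ∧ |x - y| ≤ 1 / (|(t₀:ℝ)| - 1) := by
  induction L generalizing a with
  | nil =>
    obtain ⟨t, ht, h1, h2⟩ := tail_val t₀ T' hT
    have ht0 : t ≠ 0 := ne_zero_of_one_le_abs h1
    have ha := hL a (by simp)
    obtain ⟨hs1, _⟩ := one_le_step ha h1
    have h2a := two_le_abs_cast ha
    have h2t := two_le_abs_cast (hT t₀ (by simp))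
    refine ⟨(a:ℝ) - 1/t, a, ?_, rfl, hs1, by linarith, ?_⟩
    · show mob a (cfVal (t₀ :: T')) = _
      rw [ht, mob_coe _ _ ht0]
    · have he : |((a:ℝ) - 1/t) - (a:ℝ)| = |1/t| := by
        rw [show ((a:ℝ) - 1/t) - (a:ℝ) = -(1/t) by ring, abs_neg]
      rw [he, abs_div, abs_one]
      exact one_div_le_one_div_of_le (by linarith) h2
  | cons a' L' ih =>
    obtain ⟨x', y', hx', hy', h1x, h1y, hd⟩ := ih a' (fun z hz => hL z (by simp at hz ⊢; tauto))
    have hx0 : x' ≠ 0 := ne_zero_of_one_le_abs h1x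
    have hy0 : y' ≠ 0 := ne_zero_of_one_le_abs h1y
    have ha := hL a (by simp)
    refine ⟨(a:ℝ) - 1/x', (a:ℝ) - 1/y', ?_, ?_, (one_le_step ha h1x).1,
      (one_le_step ha h1y).1, step_diff h1x h1y hd⟩
    · show mob a (cfVal ((a' :: L') ++ (t₀ :: T'))) = _
      rw [hx', mob_coe _ _ hx0]
    · show mob a (cfVal (a' :: L')) = _
      rw [hy', mob_coe _ _ hy0]

/-- **Lemma 8, first part.** If `|bᵢ| ≥ 2` for `i = 1, …, n` and `1 ≤ k ≤ n`, then the
convergents `v_n` and `v_{k-1}` are real and `|v_n - v_{k-1}| ≤ 1/(|b_k| - 1)`. -/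
theorem stmt16 (b : ℕ → ℤ) (n k : ℕ) (hb : ∀ i : ℕ, 1 ≤ i → i ≤ n → 2 ≤ |b i|)
    (hk : 1 ≤ k) (hkn : k ≤ n) :
    ∃ x y : ℝ, cfConv b n = ((x : OnePoint ℝ)) ∧ cfConv b (k - 1) = ((y : OnePoint ℝ)) ∧
      |x - y| ≤ 1 / ((|b k| : ℝ) - 1) := by
  have e1 : (List.range (n+1)).map b
      = (List.range k).map b ++ (List.range (n+1-k)).map (fun i => b (k+i)) := by
    conv_lhs => rw [show n+1 = k + (n+1-k) from by omega]
    rw [List.range_add, List.map_append, List.map_map]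
    rfl
  have e2 : (List.range k).map b = b 0 :: (List.range (k-1)).map (fun i => b (i+1)) := by
    conv_lhs => rw [show k = (k-1)+1 from by omega, List.range_succ_eq_map]
    rw [List.map_cons, List.map_map]
    rfl
  have e3 : (List.range (n+1-k)).map (fun i => b (k+i))
      = b k :: (List.range (n-k)).map (fun i => b (k+(i+1))) := by
    conv_lhs => rw [show n+1-k = (n-k)+1 from by omega, List.range_succ_eq_map]
    rw [List.map_cons, List.map_map]
    simp
  have hTmem : ∀ x ∈ b k :: (List.range (n-k)).map (fun i => b (k+(i+1))), 2 ≤ |x| := by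
    intro x hx
    simp only [List.mem_cons, List.mem_map, List.mem_range] at hx
    rcases hx with h | ⟨i, hi, rfl⟩
    · exact h ▸ hb k hk hkn
    · exact hb _ (by omega) (by omega)
  have hLmem : ∀ x ∈ (List.range (k-1)).map (fun i => b (i+1)), 2 ≤ |x| := by
    intro x hx
    simp only [List.mem_map, List.mem_range] at hx
    obtain ⟨i, hi, rfl⟩ := hx
    exact hb _ (by omega) (by omega)
  have hconv : cfConv b (k-1) = cfVal ((List.range k).map b) := by
    unfold cfConv; rw [show k-1+1 = k from by omega]
  have h2k := two_le_abs_cast (hb k hk hkn)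
  rcases eq_or_lt_of_le hk with h1k | h2k'
  · -- k = 1
    have hke : k = 1 := h1k.symm
    subst hke
    obtain ⟨t, ht, h1, h2⟩ := tail_val (b 1) _ hTmem
    have ht0 : t ≠ 0 := ne_zero_of_one_le_abs h1
    refine ⟨(b 0 : ℝ) - 1/t, (b 0 : ℝ), ?_, ?_, ?_⟩
    · unfold cfConv
      rw [e1, e2, e3]
      rw [show (1:ℕ)-1 = 0 from rfl]
      simp only [List.range_zero, List.map_nil, List.nil_append]
      show mob (b 0) (cfVal (b 1 :: _)) = _
      rw [ht, mob_coe _ _ ht0]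
    · rw [hconv, e2]
      rw [show (1:ℕ)-1 = 0 from rfl]
      simp only [List.range_zero, List.map_nil]
      rfl
    · have he : |((b 0:ℝ) - 1/t) - (b 0:ℝ)| = |1/t| := by
        rw [show ((b 0:ℝ) - 1/t) - (b 0:ℝ) = -(1/t) by ring, abs_neg]
      rw [he, abs_div, abs_one]
      exact one_div_le_one_div_of_le (by linarith) h2
  · -- k ≥ 2
    have hk2 : 2 ≤ k := h2k'
    obtain ⟨a, L'', hLe⟩ : ∃ a L'', (List.range (k-1)).map (fun i => b (i+1)) = a :: L'' := by
      rcases hL : (List.range (k-1)).map (fun i => b (i+1)) with _ | ⟨a, L''⟩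
      · exfalso
        have := congrArg List.length hL
        simp at this
        omega
      · exact ⟨a, L'', rfl⟩
    rw [hLe] at hLmem
    obtain ⟨x', y', hx', hy', h1x, h1y, hd⟩ := main_val a L'' (b k) _ hLmem hTmem
    have hx0 : x' ≠ 0 := ne_zero_of_one_le_abs h1x
    have hy0 : y' ≠ 0 := ne_zero_of_one_le_abs h1y
    refine ⟨(b 0:ℝ) - 1/x', (b 0:ℝ) - 1/y', ?_, ?_, step_diff h1x h1y hd⟩
    · unfold cfConv
      rw [e1, e2, e3, hLe]
      show mob (b 0) (cfVal ((a :: L'') ++ _)) = _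
      rw [hx', mob_coe _ _ hx0]
    · rw [hconv, e2, hLe]
      show mob (b 0) (cfVal (a :: L'')) = _
      rw [hy', mob_coe _ _ hy0]
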